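/- Let G be a group and n ≥ 2. Consider a finite directed graph with vertex set {1, …, n} and edges E₁, …, E_m, where edge E_i has origin o(i) and terminus t(i) with o(i) < t(i), and carries a label u_i ∈ G; assume the enumeration of edges satisfies: whenever t(i) = o(j), then i < j. Let F be the free group with basis v₁, …, v_n, and in the free product G * F set g_i = v_{o(i)} · u_i · v_{t(i)}⁻¹ for i = 1, …, m. Then there exist indices i₁ < i₂ < … < i_k (k ≥ 1) with g_{i₁} g_{i₂} ⋯ g_{i_k} = v₁ v_n⁻¹ in G * F if and only if there is a directed edge path E_{i₁}, E_{i₂}, …, E_{i_k} from vertex 1 to vertex n (i.e., o(i₁) = 1, t(i_k) = n, and t(i_j) = o(i_{j+1}) for all j) whose labels satisfy u_{i₁} u_{i₂} ⋯ u_{i_k} = 1 in G. -/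

import Mathlib

/-!
Projecting `G ∗ F` onto `G` and onto `F` splits the equation in two. In `F`, a product
`v_{a₁} v_{b₁}⁻¹ ⋯ v_{a_k} v_{b_k}⁻¹` with all `aᵢ < bᵢ` reduces only by cancelling
`v_{bᵢ}⁻¹ v_{aᵢ₊₁}` when `bᵢ = aᵢ₊₁`; the merged block `v_{aᵢ} v_{bᵢ₊₁}⁻¹` again has
`aᵢ < bᵢ₊₁`, so no further cancellation occurs, and the reduced word has length two exactly when
consecutive blocks match up, i.e. when the edges form a path. Along a path the product telescopes
to `v_{o(i₁)} (u_{i₁} ⋯ u_{i_k}) v_{t(i_k)}⁻¹`, and the enumeration condition makes the indices of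
a path increasing.
-/

theorem List.prod_map_mul_mul_inv_of_isChain {ι α H : Type*} [Group H] (o t : ι → α)
    (x : α → H) (y : ι → H) :
    ∀ (l : List ι) (hl : l ≠ []), l.IsChain (fun i j => t i = o j) →
      (l.map fun i => x (o i) * y i * (x (t i))⁻¹).prod =
        x (o (l.head hl)) * (l.map y).prod * (x (t (l.getLast hl)))⁻¹
  | [i], _, _ => by simp
  | i :: j :: l, _, h => by
    rw [List.isChain_cons_cons] at h
    rw [List.map_cons, List.prod_cons,
      List.prod_map_mul_mul_inv_of_isChain o t x y (j :: l) (List.cons_ne_nil _ _) h.2, h.1]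
    simp [mul_assoc]

namespace FreeGroup

theorem toWord_of_mul_inv_of {α : Type*} [DecidableEq α] {a b : α} (h : a ≠ b) :
    (of a * (of b)⁻¹).toWord = [(a, true), (b, false)] := by
  rw [toWord_mul, toWord_inv, toWord_of, toWord_of]
  exact IsReduced.reduce_eq (by simp [invRev, h])

variable {α ι : Type*} [LinearOrder α] {o t : ι → α}

theorem exists_toWord_prod_map_of_mul_inv_of (hot : ∀ i, o i < t i) :
    ∀ (l : List ι) (hl : l ≠ []), ∃ b rest,
      ((l.map fun i => of (o i) * (of (t i))⁻¹).prod).toWord =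
          (o (l.head hl), true) :: (b, false) :: rest ∧
        o (l.head hl) < b ∧ (rest = [] ↔ l.IsChain fun i j => t i = o j)
  | [i], _ => ⟨t i, [], by simp [toWord_of_mul_inv_of (hot i).ne], hot i, by simp⟩
  | i :: j :: l, _ => by
    obtain ⟨b, rest, hw, hjb, hrest⟩ :=
      exists_toWord_prod_map_of_mul_inv_of hot (j :: l) (List.cons_ne_nil _ _)
    simp only [List.head_cons] at hw hjb ⊢
    have hred : IsReduced ((o j, true) :: (b, false) :: rest) := hw ▸ isReduced_toWord
    rw [List.map_cons, List.prod_cons, toWord_mul, toWord_of_mul_inv_of (hot i).ne, hw]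
    by_cases hij : t i = o j
    · have hib : o i < b := (hot i).trans (hij ▸ hjb)
      refine ⟨b, rest, ?_, hib, by simp [hrest, hij]⟩
      have hcancel := reduce.Step.eq (Red.Step.not (L₁ := [(o i, true)]) (x := t i) (b := false)
        (L₂ := (b, false) :: rest))
      rw [← hij]
      refine hcancel.trans (IsReduced.reduce_eq ?_)
      exact isReduced_cons_cons.mpr ⟨by simp [hib.ne], (isReduced_cons_cons.mp hred).2⟩
    · refine ⟨t i, (o j, true) :: (b, false) :: rest, ?_, hot i, by simp [hij]⟩
      exact IsReduced.reduce_eq (by simp [hij, (hot i).ne, hred])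

theorem isChain_of_prod_map_of_mul_inv_of_eq (hot : ∀ i, o i < t i) {l : List ι} (hl : l ≠ [])
    {x y : α} (h : (l.map fun i => of (o i) * (of (t i))⁻¹).prod = of x * (of y)⁻¹) :
    (l.IsChain fun i j => t i = o j) ∧ o (l.head hl) = x ∧ t (l.getLast hl) = y := by
  obtain ⟨b, rest, hw, -, hrest⟩ := exists_toWord_prod_map_of_mul_inv_of hot l hl
  obtain rfl | hxy := eq_or_ne x y
  · simp [h] at hw
  rw [h, toWord_of_mul_inv_of hxy] at hw
  simp only [List.cons.injEq, Prod.mk.injEq, and_true] at hw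
  obtain ⟨rfl, rfl, hnil⟩ := hw
  have hchain := hrest.mp hnil.symm
  refine ⟨hchain, rfl, ?_⟩
  have htel := List.prod_map_mul_mul_inv_of_isChain o t of (fun _ => 1) l hl hchain
  simp only [mul_one, h, List.map_const', List.prod_replicate, one_pow, mul_right_inj, inv_inj]
    at htel
  exact of_injective htel.symm

end FreeGroup

section EdgeWord

open Monoid.Coprod

variable {G α ι : Type*} [Group G] (o t : ι → α) (u : ι → G)

def edgeWord (i : ι) : Monoid.Coprod G (FreeGroup α) :=
  inr (FreeGroup.of (o i)) * inl (u i) * (inr (FreeGroup.of (t i)))⁻¹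

theorem prod_map_edgeWord_of_isChain {l : List ι} (hl : l ≠ [])
    (h : l.IsChain fun i j => t i = o j) :
    (l.map (edgeWord o t u)).prod = inr (FreeGroup.of (o (l.head hl))) * inl (l.map u).prod *
      (inr (M := G) (FreeGroup.of (t (l.getLast hl))))⁻¹ := by
  rw [map_list_prod, List.map_map]
  exact List.prod_map_mul_mul_inv_of_isChain o t (fun a => inr (FreeGroup.of a)) _ l hl h

theorem isChain_of_prod_map_edgeWord_eq [LinearOrder α] (hot : ∀ i, o i < t i) {l : List ι}
    (hl : l ≠ []) {x y : α}
    (h : (l.map (edgeWord o t u)).prod =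
      inr (FreeGroup.of x) * (inr (M := G) (FreeGroup.of y))⁻¹) :
    (l.IsChain fun i j => t i = o j) ∧ o (l.head hl) = x ∧ t (l.getLast hl) = y ∧
      (l.map u).prod = 1 := by
  have hF := congrArg snd h
  have hG := congrArg fst h
  simp only [edgeWord, map_list_prod, List.map_map, Function.comp_def, map_mul, map_inv,
    snd_apply_inr, snd_apply_inl, fst_apply_inr, fst_apply_inl, inv_one, mul_one, one_mul]
    at hF hG
  obtain ⟨hchain, hhead, hlast⟩ := FreeGroup.isChain_of_prod_map_of_mul_inv_of_eq hot hl hF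
  exact ⟨hchain, hhead, hlast, hG⟩

end EdgeWord

/-- Reduction of the acyclic graph word problem to the subset sum problem in `G ∗ F`.
The graph has vertex set `{1,…,n}` (modeled as `Fin n`) and edges `E₁,…,E_m` with
origins `o i`, termini `t i`, `o i < t i`, labels `u i ∈ G`, and the edge enumeration
is compatible with paths: `t i = o j → i < j`. With `F = FreeGroup (Fin n)`,
`v_j = FreeGroup.of j`, and `g_i = v_{o(i)} u_i v_{t(i)}⁻¹` in `G ∗ F`, a subsequence
product of the `g_i` equals `v₁ v_n⁻¹` iff there is a directed edge path from vertex `1`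
to vertex `n` whose labels multiply to `1` in `G`. -/
theorem agp_to_ssp_coprod
    {G : Type*} [Group G] (n m : ℕ) (hn : 2 ≤ n)
    (o t : Fin m → Fin n) (hot : ∀ i, o i < t i)
    (henum : ∀ i j : Fin m, t i = o j → i < j)
    (u : Fin m → G) :
    (∃ (k : ℕ) (_ : 1 ≤ k) (idx : Fin k → Fin m), StrictMono idx ∧
        (List.ofFn fun j =>
            Monoid.Coprod.inr (FreeGroup.of (o (idx j))) * Monoid.Coprod.inl (u (idx j)) *
              (Monoid.Coprod.inr (FreeGroup.of (t (idx j))) :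
                Monoid.Coprod G (FreeGroup (Fin n)))⁻¹).prod =
          Monoid.Coprod.inr (FreeGroup.of (⟨0, by omega⟩ : Fin n)) *
            (Monoid.Coprod.inr (FreeGroup.of (⟨n - 1, by omega⟩ : Fin n)) :
              Monoid.Coprod G (FreeGroup (Fin n)))⁻¹) ↔
    (∃ (k : ℕ) (hk : 1 ≤ k) (idx : Fin k → Fin m),
        o (idx ⟨0, by omega⟩) = (⟨0, by omega⟩ : Fin n) ∧
        t (idx ⟨k - 1, by omega⟩) = (⟨n - 1, by omega⟩ : Fin n) ∧
        (∀ (j : ℕ) (hj : j + 1 < k), t (idx ⟨j, by omega⟩) = o (idx ⟨j + 1, hj⟩)) ∧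
        (List.ofFn fun j => u (idx j)).prod = 1) := by
  have hne : ∀ {k : ℕ} (idx : Fin k → Fin m), 1 ≤ k → List.ofFn idx ≠ [] := fun _ hk => by
    simp only [ne_eq, List.ofFn_eq_nil_iff]; omega
  constructor
  · rintro ⟨k, hk, idx, -, hprod⟩
    obtain ⟨hchain, hhead, hlast, hu⟩ :=
      isChain_of_prod_map_edgeWord_eq o t u hot (hne idx hk) (by rwa [List.map_ofFn])
    rw [List.head_ofFn] at hhead
    rw [List.getLast_ofFn] at hlast
    rw [List.map_ofFn] at hu
    exact ⟨k, hk, idx, hhead, hlast, List.isChain_ofFn.mp hchain, hu⟩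
  · rintro ⟨k, hk, idx, hhead, hlast, hchain, hu⟩
    replace hchain := (List.isChain_ofFn (r := fun i j => t i = o j)).mpr hchain
    refine ⟨k, hk, idx, List.sortedLT_ofFn_iff.mp (hchain.imp henum).sortedLT, ?_⟩
    have htel := prod_map_edgeWord_of_isChain o t u (hne idx hk) hchain
    rw [List.map_ofFn, List.map_ofFn, List.head_ofFn, List.getLast_ofFn, hhead, hlast] at htel
    refine htel.trans ?_
    rw [Function.comp_def, hu, map_one, mul_one]
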